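/- For n×n real positive definite symmetric matrices W and Q, the two expressions W^{1/2} (W^{1/2} Q W^{1/2})^{-1/2} W^{1/2} and Q^{-1/2} (Q^{1/2} W Q^{1/2})^{1/2} Q^{-1/2} are equal. -/

import Mathlib

/-!
Write `X = W^{1/2} (W^{1/2} Q W^{1/2})^{-1/2} W^{1/2}`. Then `X` is positive semidefinite and solves
the Riccati equation `X Q X = W`. Conjugating by `Q^{1/2}`, the positive semidefinite matrix
`Q^{1/2} X Q^{1/2}` squares to `Q^{1/2} W Q^{1/2}`, so by uniqueness of positive semidefinite square
roots it equals `(Q^{1/2} W Q^{1/2})^{1/2}`; multiplying by `Q^{-1/2}` on both sides gives the claim.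
-/

open Matrix

namespace Matrix.PosSemidef

open scoped ComplexOrder

noncomputable def sqrt {n 𝕜 : Type*} [Fintype n] [RCLike 𝕜] [DecidableEq n]
    {A : Matrix n n 𝕜} (hA : A.PosSemidef) : Matrix n n 𝕜 :=
  hA.1.eigenvectorUnitary.1 * diagonal ((↑) ∘ (√·) ∘ hA.1.eigenvalues) *
    (star hA.1.eigenvectorUnitary : Matrix n n 𝕜)

variable {n 𝕜 : Type*} [Fintype n] [RCLike 𝕜] [DecidableEq n] {A : Matrix n n 𝕜}

theorem sqrt_mul_self (hA : A.PosSemidef) : hA.sqrt * hA.sqrt = A := by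
  conv_rhs => rw [hA.1.spectral_theorem, Unitary.conjStarAlgAut_apply]
  have hU : (star hA.1.eigenvectorUnitary : Matrix n n 𝕜) * hA.1.eigenvectorUnitary.1 = 1 :=
    Unitary.coe_star_mul_self _
  rw [sqrt, show ∀ a b c d e f : Matrix n n 𝕜, a * b * c * (d * e * f) = a * (b * (c * d) * e) * f by
    intros; simp only [mul_assoc], hU, mul_one, diagonal_mul_diagonal]
  congr 3
  funext i
  simp only [Function.comp_apply]
  rw [← RCLike.ofReal_mul, Real.mul_self_sqrt (hA.eigenvalues_nonneg i)]

theorem posSemidef_sqrt (hA : A.PosSemidef) : hA.sqrt.PosSemidef := by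
  have hD : (diagonal ((↑) ∘ (√·) ∘ hA.1.eigenvalues) : Matrix n n 𝕜).PosSemidef := by
    rw [posSemidef_diagonal_iff]
    intro i
    simpa only [Function.comp_apply, RCLike.ofReal_nonneg] using Real.sqrt_nonneg _
  exact hD.mul_mul_conjTranspose_same _

theorem eq_sqrt_of_mul_self_eq (hA : A.PosSemidef) {B : Matrix n n 𝕜} (hB : B.PosSemidef)
    (h : B * B = A) : B = hA.sqrt := by
  open scoped MatrixOrder in
  exact (CFC.mul_self_eq_mul_self_iff B hA.sqrt (nonneg_iff_posSemidef.mpr hB)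
    (nonneg_iff_posSemidef.mpr hA.posSemidef_sqrt)).mp (h.trans hA.sqrt_mul_self.symm)

theorem isUnit_det_sqrt (hA : A.PosSemidef) (h : IsUnit A.det) : IsUnit hA.sqrt.det := by
  rw [← hA.sqrt_mul_self, det_mul, IsUnit.mul_iff] at h
  exact h.1

theorem conj_eq_sqrt_of_riccati {B X W : Matrix n n 𝕜} (hB : B.IsHermitian) (hX : X.PosSemidef)
    (hBWB : (B * W * B).PosSemidef) (h : X * (B * B) * X = W) : B * X * B = hBWB.sqrt := by
  have hBXB : (B * X * B).PosSemidef := by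
    simpa only [hB.eq] using hX.mul_mul_conjTranspose_same B
  refine hBWB.eq_sqrt_of_mul_self_eq hBXB ?_
  rw [← h]
  noncomm_ring

end Matrix.PosSemidef

theorem Matrix.riccati_mul_inv_mul {n 𝕜 : Type*} [Fintype n] [Field 𝕜] [DecidableEq n]
    {A Q S : Matrix n n 𝕜} (hS : S * S = A * Q * A) (hSdet : IsUnit S.det) :
    A * S⁻¹ * A * Q * (A * S⁻¹ * A) = A * A := by
  calc A * S⁻¹ * A * Q * (A * S⁻¹ * A) = A * (S⁻¹ * (A * Q * A) * S⁻¹) * A := by noncomm_ring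
    _ = A * A := by
      rw [← hS, nonsing_inv_mul_cancel_left _ _ hSdet, mul_nonsing_inv _ hSdet, mul_one]

/-- For n×n real positive definite symmetric matrices `W` and `Q`,
`W^{1/2} (W^{1/2} Q W^{1/2})^{-1/2} W^{1/2} = Q^{-1/2} (Q^{1/2} W Q^{1/2})^{1/2} Q^{-1/2}`. -/
theorem stmt2 {n : ℕ} (W Q : Matrix (Fin n) (Fin n) ℝ)
    (hW : W.PosDef) (hQ : Q.PosDef)
    (h1 : (hW.posSemidef.sqrt * Q * hW.posSemidef.sqrt).PosSemidef)
    (h2 : (hQ.posSemidef.sqrt * W * hQ.posSemidef.sqrt).PosSemidef) :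
    hW.posSemidef.sqrt * h1.sqrt⁻¹ * hW.posSemidef.sqrt =
      hQ.posSemidef.sqrt⁻¹ * h2.sqrt * hQ.posSemidef.sqrt⁻¹ := by
  have hWdet : IsUnit W.det := hW.det_pos.ne'.isUnit
  have hQdet : IsUnit Q.det := hQ.det_pos.ne'.isUnit
  have hAdet : IsUnit hW.posSemidef.sqrt.det := hW.posSemidef.isUnit_det_sqrt hWdet
  have hBdet : IsUnit hQ.posSemidef.sqrt.det := hQ.posSemidef.isUnit_det_sqrt hQdet
  have hSdet : IsUnit h1.sqrt.det := by
    refine h1.isUnit_det_sqrt ?_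
    rw [det_mul, det_mul]
    exact (hAdet.mul hQdet).mul hAdet
  have hX : (hW.posSemidef.sqrt * h1.sqrt⁻¹ * hW.posSemidef.sqrt).PosSemidef := by
    have := h1.posSemidef_sqrt.inv.mul_mul_conjTranspose_same hW.posSemidef.sqrt
    rwa [hW.posSemidef.posSemidef_sqrt.isHermitian.eq] at this
  have hBXB : hQ.posSemidef.sqrt * (hW.posSemidef.sqrt * h1.sqrt⁻¹ * hW.posSemidef.sqrt) *
      hQ.posSemidef.sqrt = h2.sqrt := by
    refine hX.conj_eq_sqrt_of_riccati hQ.posSemidef.posSemidef_sqrt.isHermitian h2 ?_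
    rw [hQ.posSemidef.sqrt_mul_self, riccati_mul_inv_mul h1.sqrt_mul_self hSdet,
      hW.posSemidef.sqrt_mul_self]
  rw [← hBXB]
  simp only [mul_assoc, nonsing_inv_mul_cancel_left _ _ hBdet, mul_nonsing_inv _ hBdet, mul_one]
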